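/- Let Q ⊆ ℝ^n be a polytope, let c, v ∈ ℝ^n with v ≠ 0, and let x^0, x^1, …, x^k be a Shadow-rule path on Q with auxiliary vector v and objective c whose starting vertex x^0 maximizes ⟨c,·⟩ over the v-minimal face F = {x ∈ Q : ⟨v,x⟩ = min_{y ∈ Q} ⟨v,y⟩}. Then the length k of the path satisfies k ≤ |{⟨v,u⟩ : u a vertex of Q}| − 1, and some vertex of the path maximizes ⟨c,·⟩ over Q. -/

import Mathlib

open Finset

attribute [local instance] Classical.propDecidable

noncomputable section

/-- Standard dot product on `Fin n → ℝ`. -/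
def dotR {n : ℕ} (c x : Fin n → ℝ) : ℝ := ∑ i, c i * x i

/-- A polytope: the convex hull of a finite nonempty set of points. -/
def IsPolytope {n : ℕ} (P : Set (Fin n → ℝ)) : Prop :=
  ∃ V : Finset (Fin n → ℝ), V.Nonempty ∧ P = convexHull ℝ (V : Set (Fin n → ℝ))

/-- A 0/1 polytope: the convex hull of a finite nonempty subset of `{0,1}^n`. -/
def IsPolytope01 {n : ℕ} (P : Set (Fin n → ℝ)) : Prop :=
  ∃ V : Finset (Fin n → ℝ), V.Nonempty ∧ (∀ w ∈ V, ∀ i, w i = 0 ∨ w i = 1) ∧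
    P = convexHull ℝ (V : Set (Fin n → ℝ))

/-- A vertex of `P` is an extreme point of `P`. -/
def IsVertex {n : ℕ} (P : Set (Fin n → ℝ)) (x : Fin n → ℝ) : Prop :=
  x ∈ P.extremePoints ℝ

/-- Two distinct vertices are adjacent when the segment between them is a face. -/
def Adjacent {n : ℕ} (P : Set (Fin n → ℝ)) (x y : Fin n → ℝ) : Prop :=
  IsVertex P x ∧ IsVertex P y ∧ x ≠ y ∧ IsExtreme ℝ P (segment ℝ x y)

/-- `u` is a `w`-improving neighbor of `x`. -/
def ImpNbr {n : ℕ} (P : Set (Fin n → ℝ)) (w x u : Fin n → ℝ) : Prop :=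
  Adjacent P x u ∧ dotR w x < dotR w u

/-- A Shadow-rule path on `P` with auxiliary vector `v` and objective `c`:
vertices `x 0, …, x k`, each step a `v`-improving neighbor maximizing the slope
`⟨c, u − xᵢ⟩ / ⟨v, u − xᵢ⟩` over all `v`-improving neighbors, and the last vertex
has no `v`-improving neighbor. -/
def ShadowPath {n : ℕ} (P : Set (Fin n → ℝ)) (c v : Fin n → ℝ) (k : ℕ)
    (x : ℕ → Fin n → ℝ) : Prop :=
  (∀ i ≤ k, IsVertex P (x i)) ∧
  (∀ i < k, ImpNbr P v (x i) (x (i + 1)) ∧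
    ∀ u, ImpNbr P v (x i) u →
      dotR c (u - x i) / dotR v (u - x i)
        ≤ dotR c (x (i + 1) - x i) / dotR v (x (i + 1) - x i)) ∧
  (∀ u, ¬ ImpNbr P v (x k) u)

/-- `f(u)` relative to `x0`: the largest index (in `1, …, n` labelling) where `u`
differs from `x0`, and `0` if there is none. -/
def lastIdx {n : ℕ} (x0 u : Fin n → ℝ) : ℕ :=
  (Finset.univ.filter fun j : Fin n => u j ≠ x0 j).sup fun j => (j : ℕ) + 1

/-- `f(w)` for a 0/1 vector: the largest index (in `1, …, n` labelling) with
`w j = 1`, and `0` for the zero vector. -/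
def lastOne {n : ℕ} (w : Fin n → ℝ) : ℕ :=
  (Finset.univ.filter fun j : Fin n => w j = 1).sup fun j => (j : ℕ) + 1

/-!
Along a Shadow-rule path `⟨v, ·⟩` strictly increases, which bounds the length. For optimality one
keeps the invariant that the current vertex `xᵢ` maximizes `c - μ v` over `Q` for some `μ ≥ 0`;
it holds at `x⁰` for large `μ` because `x⁰` is `c`-maximal on the `v`-minimal face. The key fact
is that a vertex maximizing `c - μ₁ v` that beats all its `v`-improving neighbours for `c - μ₂ v`,
`μ₂ ≤ μ₁`, maximizes `c - μ₂ v`. The Shadow rule therefore lets `μ` drop to the slope `σᵢ` of the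
chosen edge, so `xᵢ₊₁` maximizes `c - σᵢ v`; when `σᵢ < 0`, or at the end of the path, the same
fact with `μ₂ = 0` shows that the current vertex maximizes `c`.
-/

theorem Finset.exists_nonneg_isMaxOn_add_mul {α : Type*} {s : Finset α} {f φ : α → ℝ} {y : α}
    (hf : IsMaxOn f s y) (hφ : ∃ u ∈ s, φ y < φ u) :
    ∃ t, 0 ≤ t ∧ IsMaxOn (fun u => f u + t * φ u) s y ∧
      ∃ u ∈ s, φ y < φ u ∧ f u + t * φ u = f y + t * φ y := by
  have hD : (s.filter fun u => φ y < φ u).Nonempty := Finset.filter_nonempty_iff.2 hφ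
  obtain ⟨u₀, hu₀, hmin⟩ := (s.filter fun u => φ y < φ u).exists_min_image
    (fun u => (f y - f u) / (φ u - φ y)) hD
  rw [Finset.mem_filter] at hu₀
  have hu₀pos : 0 < φ u₀ - φ y := sub_pos.2 hu₀.2
  refine ⟨(f y - f u₀) / (φ u₀ - φ y), div_nonneg (sub_nonneg.2 (hf hu₀.1)) hu₀pos.le,
    isMaxOn_iff.2 fun u hu => ?_, u₀, hu₀.1, hu₀.2, ?_⟩
  · rcases lt_or_ge (φ y) (φ u) with hlt | hle
    · have := (le_div_iff₀ (sub_pos.2 hlt)).1 (hmin u (Finset.mem_filter.2 ⟨hu, hlt⟩))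
      linarith
    · have := mul_le_mul_of_nonneg_left hle
        (div_nonneg (sub_nonneg.2 (hf hu₀.1)) hu₀pos.le)
      linarith [show f u ≤ f y from hf hu]
  · field_simp
    ring

section Polytope

variable {E : Type*} [AddCommGroup E] [Module ℝ E] [TopologicalSpace E]

theorem isMaxOn_convexHull_iff {l : StrongDual ℝ E} {s : Set E} {y : E} :
    IsMaxOn l (convexHull ℝ s) y ↔ IsMaxOn l s y := by
  refine ⟨fun h => h.on_subset (subset_convexHull ℝ s), fun h x hx => ?_⟩
  obtain ⟨z, hz, hxz⟩ :=
    ((l : E →ₗ[ℝ] ℝ).convexOn convex_univ).exists_ge_of_mem_convexHull (Set.subset_univ s) hx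
  exact hxz.trans (h hz)

theorem isMaxOn_sub_smul_of_le {c v : StrongDual ℝ E} {s : Set E} {y : E} {μ b : ℝ}
    (hb : IsMaxOn (c - b • v) s y) (hμ : μ ≤ b)
    (hup : ∀ u ∈ s, v y < v u → (c - μ • v) u ≤ (c - μ • v) y) :
    IsMaxOn (c - μ • v) s y := by
  refine isMaxOn_iff.2 fun u hu => ?_
  rcases lt_or_ge (v y) (v u) with hlt | hle
  · exact hup u hu hlt
  · have := isMaxOn_iff.1 hb u hu
    simp only [sub_apply, smul_apply, smul_eq_mul] at this ⊢
    nlinarith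

theorem exists_nonneg_isMaxOn_sub_smul {V : Finset E} {c v : StrongDual ℝ E} {y : E}
    (hmin : IsMinOn v (convexHull ℝ (V : Set E)) y)
    (hmax : ∀ z ∈ convexHull ℝ (V : Set E), v z = v y → c z ≤ c y) :
    ∃ μ : ℝ, 0 ≤ μ ∧ IsMaxOn (c - μ • v) (convexHull ℝ (V : Set E)) y := by
  obtain ⟨μ₀, hμ₀⟩ := (V.image fun u => (c u - c y) / (v u - v y)).exists_le
  refine ⟨max μ₀ 0, le_max_right _ _, isMaxOn_convexHull_iff.2 (isMaxOn_iff.2 fun u hu => ?_)⟩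
  have huV := subset_convexHull ℝ _ hu
  simp only [sub_apply, smul_apply, smul_eq_mul]
  rcases (isMinOn_iff.1 hmin u huV).eq_or_lt with heq | hlt
  · have := hmax u huV heq.symm
    rw [heq]
    linarith
  · have := (div_le_iff₀ (sub_pos.2 hlt)).1
      ((hμ₀ _ (Finset.mem_image_of_mem _ hu)).trans (le_max_left μ₀ 0))
    linarith

variable [T2Space E] [IsTopologicalAddGroup E] [ContinuousSMul ℝ E] [LocallyConvexSpace ℝ E]

theorem Set.Finite.convexHull_extremePoints_convexHull {s : Set E} (hs : s.Finite) :
    convexHull ℝ ((convexHull ℝ s).extremePoints ℝ) = convexHull ℝ s := by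
  have hfin : ((convexHull ℝ s).extremePoints ℝ).Finite :=
    hs.subset extremePoints_convexHull_subset
  rw [← (hfin.isClosed_convexHull ℝ).closure_eq]
  exact closure_convexHull_extremePoints (hs.isCompact_convexHull ℝ) (convex_convexHull ℝ s)

theorem isExtreme_convexHull_filter_eq {V : Finset E} {l : StrongDual ℝ E} {y : E} (hy : y ∈ V)
    (hmax : IsMaxOn l V y) :
    IsExtreme ℝ (convexHull ℝ V) (convexHull ℝ (↑(V.filter fun u => l u = l y) : Set E)) := by
  set W : Finset E := V.filter fun u => l u = l y
  set F := l.toExposed (convexHull ℝ V)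
  have hF : IsExposed ℝ (convexHull ℝ V) F := ContinuousLinearMap.toExposed.isExposed
  have hmax' : IsMaxOn l (convexHull ℝ V) y := isMaxOn_convexHull_iff.2 hmax
  have hyF : y ∈ F := ⟨subset_convexHull ℝ _ hy, fun z hz => hmax' hz⟩
  suffices F = convexHull ℝ W from this ▸ hF.isExtreme
  apply subset_antisymm
  · have hext : F.extremePoints ℝ ⊆ W := fun x hx => by
      have hxV : x ∈ V :=
        extremePoints_convexHull_subset (hF.isExtreme.extremePoints_subset_extremePoints hx)
      simpa [W, hxV] using le_antisymm (hmax' hx.1.1) (hx.1.2 y hyF.1)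
    rw [← closure_convexHull_extremePoints (hF.isCompact (V.finite_toSet.isCompact_convexHull ℝ))
      (hF.convex (convex_convexHull ℝ _))]
    exact closure_minimal (convexHull_mono hext) (W.finite_toSet.isClosed_convexHull ℝ)
  · intro x hx
    have hlx : l x = l y :=
      convexHull_min (fun u hu => (Finset.mem_filter.1 hu).2)
        (convex_hyperplane (l : E →ₗ[ℝ] ℝ).isLinear (l y)) hx
    exact ⟨convexHull_mono (Finset.filter_subset _ V) hx, fun z hz => hlx ▸ hmax' hz⟩

theorem Set.Finite.exists_forall_lt_of_mem_extremePoints_convexHull {s : Set E} (hs : s.Finite)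
    {y : E} (hy : y ∈ (convexHull ℝ s).extremePoints ℝ) :
    ∃ g : StrongDual ℝ E, ∀ u ∈ s, u ≠ y → g u < g y := by
  have hy' : y ∉ convexHull ℝ (s \ {y}) := fun h =>
    ((convex_convexHull ℝ s).mem_extremePoints_iff_mem_sdiff_convexHull_sdiff.1 hy).2
      (convexHull_mono (Set.sdiff_subset_sdiff_left (subset_convexHull ℝ s)) h)
  obtain ⟨g, r, hg, hgy⟩ := geometric_hahn_banach_closed_point (convex_convexHull ℝ _)
    (hs.sdiff.isClosed_convexHull ℝ) hy'
  exact ⟨g, fun u hu hne => (hg u (subset_convexHull ℝ _ ⟨hu, hne⟩)).trans hgy⟩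

theorem exists_strongDual_lt_lt_of_mem_extremePoints {A : Set E} {y z₁ z₂ : E} (hy : y ∈ A)
    (h₁ : z₁ ∈ A.extremePoints ℝ) (h₂ : z₂ ∈ A.extremePoints ℝ)
    (hy₁ : z₁ ≠ y) (hy₂ : z₂ ≠ y) (h₁₂ : z₁ ≠ z₂) :
    ∃ l : StrongDual ℝ E, l z₁ < l y ∧ l y < l z₂ := by
  -- otherwise `z₁ - y` and `z₂ - y` point the same way and one of `z₁`, `z₂` lies between `y`
  -- and the other
  have h0 : (0 : E) ∉ segment ℝ (y - z₁) (z₂ - y) := by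
    intro h
    rw [mem_segment_iff_sameRay, zero_sub, sub_zero, neg_sub] at h
    obtain ⟨r, hr, hrz⟩ := h.exists_pos_left (sub_ne_zero.2 hy₁) (sub_ne_zero.2 hy₂)
    have key := wbtw_or_wbtw_smul_vadd_of_nonneg y (z₁ - y) zero_le_one hr.le
    rw [one_smul, hrz, vadd_eq_add, vadd_eq_add, sub_add_cancel, sub_add_cancel] at key
    simp only [← mem_segment_iff_wbtw] at key
    rcases key with h | h
    · rcases (mem_extremePoints_iff_forall_segment.1 h₁).2 y hy z₂ h₂.1 h with h | h
      exacts [hy₁ h.symm, h₁₂ h.symm]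
    · rcases (mem_extremePoints_iff_forall_segment.1 h₂).2 y hy z₁ h₁.1 h with h | h
      exacts [hy₂ h.symm, h₁₂ h]
  obtain ⟨l, r, hl0, hl⟩ := geometric_hahn_banach_point_closed (convex_segment _ _)
    (convexHull_pair (𝕜 := ℝ) (y - z₁) (z₂ - y) ▸ (Set.toFinite _).isClosed_convexHull ℝ) h0
  have hl₁ := hl _ (left_mem_segment ℝ _ _)
  have hl₂ := hl _ (right_mem_segment ℝ _ _)
  rw [map_zero] at hl0
  rw [map_sub] at hl₁ hl₂
  exact ⟨l, by linarith, by linarith⟩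

theorem exists_ssubset_isExtreme_of_le {W : Finset E} {y z : E} {φ : StrongDual ℝ E}
    (hy : y ∈ (convexHull ℝ (W : Set E)).extremePoints ℝ) (hz : z ∈ W) (hzy : z ≠ y)
    (hφz : φ z ≤ φ y) (hφ : ∃ u ∈ W, φ y < φ u) :
    ∃ W' ⊂ W, y ∈ W' ∧ (∃ u ∈ W', φ y < φ u) ∧
      IsExtreme ℝ (convexHull ℝ (W : Set E)) (convexHull ℝ (W' : Set E)) := by
  have hyW : y ∈ W := extremePoints_convexHull_subset hy
  obtain ⟨g, hg⟩ := W.finite_toSet.exists_forall_lt_of_mem_extremePoints_convexHull hy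
  obtain ⟨t, ht, hmax, u, hu, hφu, hgu⟩ :=
    W.exists_nonneg_isMaxOn_add_mul (f := g) (φ := φ)
      (isMaxOn_iff.2 fun u hu => if h : u = y then (congrArg g h).le else (hg u hu h).le) hφ
  set h := g + t • φ
  have hhz : g z + t * φ z < g y + t * φ y := by
    linarith [hg z hz hzy, mul_le_mul_of_nonneg_left hφz ht]
  refine ⟨W.filter fun u => h u = h y, Finset.filter_ssubset.2 ⟨z, hz, by simp [h, hhz.ne]⟩,
    by simp [hyW], ⟨u, Finset.mem_filter.2 ⟨hu, hgu⟩, hφu⟩,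
    isExtreme_convexHull_filter_eq hyW hmax⟩

theorem exists_ssubset_isExtreme_of_ne {W : Finset E} {y u z : E} {l : StrongDual ℝ E}
    (hy : y ∈ (convexHull ℝ (W : Set E)).extremePoints ℝ)
    (hu : u ∈ (convexHull ℝ (W : Set E)).extremePoints ℝ)
    (hz : z ∈ (convexHull ℝ (W : Set E)).extremePoints ℝ)
    (hlu : l y < l u) (hzy : z ≠ y) (hzu : z ≠ u) :
    ∃ W' ⊂ W, y ∈ W' ∧ (∃ u ∈ W', l y < l u) ∧
      IsExtreme ℝ (convexHull ℝ (W : Set E)) (convexHull ℝ (W' : Set E)) := by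
  have huW : u ∈ W := extremePoints_convexHull_subset hu
  by_cases hlow : ∃ z' ∈ W, z' ≠ y ∧ l z' ≤ l y
  · obtain ⟨z', hz'W, hz'y, hlz'⟩ := hlow
    exact exists_ssubset_isExtreme_of_le hy hz'W hz'y hlz' ⟨u, huW, hlu⟩
  · simp only [not_exists, not_and, not_le] at hlow
    -- every vertex other than `y` is `l`-higher, so any functional putting `y` strictly
    -- between `z` and `u` cuts off a smaller face that still has an `l`-higher vertex
    obtain ⟨φ, hφz, hφu⟩ := exists_strongDual_lt_lt_of_mem_extremePoints hy.1 hz hu hzy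
      (fun h => (h ▸ hlu).false) hzu
    obtain ⟨W', hW'W, hyW', ⟨u', hu'W', hφu'⟩, hW'ext⟩ := exists_ssubset_isExtreme_of_le hy
      (extremePoints_convexHull_subset hz) hzy hφz.le ⟨u, huW, hφu⟩
    exact ⟨W', hW'W, hyW', ⟨u', hu'W', hlow u' (hW'W.subset hu'W') fun h => (h ▸ hφu').false⟩,
      hW'ext⟩

theorem exists_isExtreme_segment_of_lt {V : Finset E} {y : E} {l : StrongDual ℝ E}
    (hy : y ∈ (convexHull ℝ (V : Set E)).extremePoints ℝ)
    (hl : ∃ p ∈ convexHull ℝ (V : Set E), l y < l p) :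
    ∃ u ∈ (convexHull ℝ (V : Set E)).extremePoints ℝ,
      IsExtreme ℝ (convexHull ℝ (V : Set E)) (segment ℝ y u) ∧ l y < l u := by
  set A := convexHull ℝ (V : Set E)
  set V₀ : Finset E := (V.finite_toSet.subset (extremePoints_convexHull_subset (𝕜 := ℝ))).toFinset
  have hV₀ : convexHull ℝ (V₀ : Set E) = A := by
    rw [Set.Finite.coe_toFinset]
    exact V.finite_toSet.convexHull_extremePoints_convexHull
  have hV₀ext : ∀ u ∈ V₀, u ∈ A.extremePoints ℝ := by simp [V₀, A]
  obtain ⟨u₀, hu₀, hlu₀⟩ : ∃ u ∈ V₀, l y < l u := by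
    by_contra! h
    obtain ⟨p, hp, hlp⟩ := hl
    exact (isMaxOn_convexHull_iff.2 (isMaxOn_iff.2 h) (hV₀ ▸ hp)).not_gt hlp
  -- a minimal face containing `y` and an `l`-higher vertex is an edge
  set 𝓕 := V₀.powerset.filter fun W : Finset E =>
    y ∈ W ∧ (∃ u ∈ W, l y < l u) ∧ IsExtreme ℝ A (convexHull ℝ (W : Set E))
  obtain ⟨W, hW𝓕, hWmin⟩ := 𝓕.exists_min_image Finset.card
    ⟨V₀, Finset.mem_filter.2 ⟨Finset.mem_powerset_self V₀, by simpa [V₀, A] using hy,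
      ⟨u₀, hu₀, hlu₀⟩, hV₀ ▸ IsExtreme.rfl⟩⟩
  simp only [𝓕, Finset.mem_filter, Finset.mem_powerset] at hW𝓕 hWmin
  obtain ⟨hWV₀, hyW, ⟨u, huW, hlu⟩, hWA⟩ := hW𝓕
  have hextW : ∀ w ∈ W, w ∈ (convexHull ℝ (W : Set E)).extremePoints ℝ := fun w hw =>
    inter_extremePoints_subset_extremePoints_of_subset hWA.1
      ⟨subset_convexHull ℝ _ hw, hV₀ext w (hWV₀ hw)⟩
  have hWyu : (W : Set E) = {y, u} := by
    refine Set.Subset.antisymm (fun z hzW => ?_) (Set.insert_subset hyW (by simpa using huW))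
    by_contra! hz
    simp only [Set.mem_insert_iff, Set.mem_singleton_iff, not_or] at hz
    obtain ⟨W', hW'W, hyW', hu', hW'ext⟩ := exists_ssubset_isExtreme_of_ne (hextW y hyW)
      (hextW u huW) (hextW z hzW) hlu hz.1 hz.2
    exact (Finset.card_lt_card hW'W).not_ge
      (hWmin W' ⟨hW'W.subset.trans hWV₀, hyW', hu', hWA.trans hW'ext⟩)
  refine ⟨u, hV₀ext u (hWV₀ huW), ?_, hlu⟩
  rw [← convexHull_pair, ← hWyu]
  exact hWA

theorem isMaxOn_sub_smul_of_forall_isExtreme_segment {V : Finset E} {c v : StrongDual ℝ E} {y : E}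
    {μ₁ μ₂ : ℝ} (hy : y ∈ (convexHull ℝ (V : Set E)).extremePoints ℝ) (hμ : μ₂ ≤ μ₁)
    (h₁ : IsMaxOn (c - μ₁ • v) (convexHull ℝ (V : Set E)) y)
    (h₂ : ∀ u ∈ (convexHull ℝ (V : Set E)).extremePoints ℝ,
      IsExtreme ℝ (convexHull ℝ (V : Set E)) (segment ℝ y u) → v y < v u →
        (c - μ₂ • v) u ≤ (c - μ₂ • v) y) :
    IsMaxOn (c - μ₂ • v) (convexHull ℝ (V : Set E)) y := by
  rw [isMaxOn_convexHull_iff] at h₁ ⊢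
  refine isMaxOn_sub_smul_of_le h₁ hμ fun u hu hvu => ?_
  -- lower `μ₁` to the value `a` at which the face of maximizers of `c - a • v` first contains a
  -- `v`-higher vertex; an edge of that face is `v`-improving, which forces `a ≤ μ₂`
  obtain ⟨t, -, hmax, u₁, hu₁, hvu₁, hu₁eq⟩ :=
    V.exists_nonneg_isMaxOn_add_mul (f := ⇑(c - μ₁ • v)) (φ := v) h₁ ⟨u, hu, hvu⟩
  set a := μ₁ - t
  have hfa : ⇑(c - a • v) = fun x => (c - μ₁ • v) x + t * v x := by
    funext x
    simp only [sub_apply, smul_apply, smul_eq_mul, a]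
    ring
  have hyV : y ∈ V := extremePoints_convexHull_subset hy
  have hF := isExtreme_convexHull_filter_eq hyV (l := c - a • v) (hfa ▸ hmax)
  obtain ⟨w, hw, hedge, hvw⟩ := exists_isExtreme_segment_of_lt (l := v)
    (inter_extremePoints_subset_extremePoints_of_subset hF.1
      ⟨subset_convexHull ℝ _ (by simp [hyV]), hy⟩)
    ⟨u₁, subset_convexHull ℝ _ (Finset.mem_filter.2 ⟨hu₁, by rw [hfa]; exact hu₁eq⟩), hvu₁⟩
  have hwa : (c - a • v) w = (c - a • v) y :=
    (Finset.mem_filter.1 (extremePoints_convexHull_subset hw)).2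
  have hwμ := h₂ w (hF.extremePoints_subset_extremePoints hw) (hF.trans hedge) hvw
  have ha : a ≤ μ₂ := by
    simp only [sub_apply, smul_apply, smul_eq_mul] at hwa hwμ
    nlinarith
  have hua := isMaxOn_iff.1 (hfa ▸ hmax) u hu
  simp only [sub_apply, smul_apply, smul_eq_mul] at hua ⊢
  nlinarith

end Polytope

section ShadowPath

variable {n : ℕ}

def dotCLM (w : Fin n → ℝ) : StrongDual ℝ (Fin n → ℝ) :=
  LinearMap.toContinuousLinearMap
    { toFun := dotR w
      map_add' := dotProduct_add w
      map_smul' := fun r x => dotProduct_smul r w x }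

@[simp]
theorem dotCLM_apply (w x : Fin n → ℝ) : dotCLM w x = dotR w x := rfl

theorem dotR_sub (w x y : Fin n → ℝ) : dotR w (x - y) = dotR w x - dotR w y :=
  dotProduct_sub w x y

variable {Q : Set (Fin n → ℝ)} {c v : Fin n → ℝ}

theorem IsPolytope.isMaxOn_sub_smul_of_forall_impNbr (hQ : IsPolytope Q) {y : Fin n → ℝ}
    (hy : IsVertex Q y) {μ₁ μ₂ : ℝ} (hμ : μ₂ ≤ μ₁)
    (h₁ : IsMaxOn (dotCLM c - μ₁ • dotCLM v) Q y)
    (h₂ : ∀ u, ImpNbr Q v y u →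
      (dotCLM c - μ₂ • dotCLM v) u ≤ (dotCLM c - μ₂ • dotCLM v) y) :
    IsMaxOn (dotCLM c - μ₂ • dotCLM v) Q y := by
  obtain ⟨V, -, rfl⟩ := hQ
  exact isMaxOn_sub_smul_of_forall_isExtreme_segment hy hμ h₁ fun u hu hseg hvu =>
    h₂ u ⟨⟨hy, hu, fun h => (h ▸ hvu).false, hseg⟩, hvu⟩

variable {k : ℕ} {x : ℕ → Fin n → ℝ}

theorem ShadowPath.strictMonoOn_dotR (hpath : ShadowPath Q c v k x) :
    StrictMonoOn (fun i => dotR v (x i)) (Set.Iic k) :=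
  strictMonoOn_Iic_of_lt_succ fun i hi => (hpath.2.1 i hi).1.2

theorem ShadowPath.succ_le_ncard (hQ : IsPolytope Q) (hpath : ShadowPath Q c v k x) :
    k + 1 ≤ ((fun u => dotR v u) '' Q.extremePoints ℝ).ncard := by
  obtain ⟨V, -, rfl⟩ := hQ
  have hfin := (V.finite_toSet.subset (extremePoints_convexHull_subset (𝕜 := ℝ))).image
    fun u => dotR v u
  calc k + 1 = ((fun i => dotR v (x i)) '' Set.Iic k).ncard := by
        rw [hpath.strictMonoOn_dotR.injOn.ncard_image, Set.ncard_Iic_nat]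
    _ ≤ _ := Set.ncard_le_ncard (by rintro _ ⟨i, hi, rfl⟩; exact ⟨x i, hpath.1 i hi, rfl⟩) hfin

theorem ShadowPath.isMaxOn_or_isMaxOn_succ (hQ : IsPolytope Q) (hpath : ShadowPath Q c v k x)
    {i : ℕ} (hi : i < k) {μ : ℝ} (hμ : 0 ≤ μ)
    (hopt : IsMaxOn (dotCLM c - μ • dotCLM v) Q (x i)) :
    IsMaxOn (dotCLM c) Q (x i) ∨
      ∃ σ : ℝ, 0 ≤ σ ∧ IsMaxOn (dotCLM c - σ • dotCLM v) Q (x (i + 1)) := by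
  obtain ⟨⟨⟨-, hnext, -, -⟩, hvlt⟩, hrule⟩ := hpath.2.1 i hi
  set σ := dotR c (x (i + 1) - x i) / dotR v (x (i + 1) - x i)
  have hpos : 0 < dotR v (x (i + 1) - x i) := by rw [dotR_sub]; linarith
  have hσ_le : ∀ u, ImpNbr Q v (x i) u →
      (dotCLM c - σ • dotCLM v) u ≤ (dotCLM c - σ • dotCLM v) (x i) := fun u hu => by
    have h := (div_le_iff₀ (by rw [dotR_sub]; linarith [hu.2])).1 (hrule u hu)
    simp only [sub_apply, smul_apply, smul_eq_mul, dotCLM_apply]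
    rw [dotR_sub, dotR_sub] at h
    linarith
  have hσμ : σ ≤ μ := by
    refine (div_le_iff₀ hpos).2 ?_
    have h := isMaxOn_iff.1 hopt _ hnext.1
    simp only [sub_apply, smul_apply, smul_eq_mul, dotCLM_apply] at h
    rw [dotR_sub, dotR_sub]
    linarith
  by_cases hσ : 0 ≤ σ
  · refine Or.inr ⟨σ, hσ, isMaxOn_iff.2 fun z hz => ?_⟩
    have hstep : dotR c (x (i + 1) - x i) = σ * dotR v (x (i + 1) - x i) :=
      (div_mul_cancel₀ _ hpos.ne').symm
    have h := isMaxOn_iff.1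
      (hQ.isMaxOn_sub_smul_of_forall_impNbr (hpath.1 i hi.le) hσμ hopt hσ_le) z hz
    simp only [sub_apply, smul_apply, smul_eq_mul, dotCLM_apply] at h ⊢
    rw [dotR_sub, dotR_sub] at hstep
    linarith
  · have h := hQ.isMaxOn_sub_smul_of_forall_impNbr (μ₂ := 0) (hpath.1 i hi.le) hμ hopt
      fun u hu => by
        have h := hσ_le u hu
        simp only [sub_apply, smul_apply, smul_eq_mul, dotCLM_apply, zero_mul, sub_zero] at h ⊢
        nlinarith [hu.2]
    exact Or.inl (by simpa using h)

theorem ShadowPath.exists_isMaxOn (hQ : IsPolytope Q) (hpath : ShadowPath Q c v k x) {μ : ℝ}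
    (hμ : 0 ≤ μ) (h₀ : IsMaxOn (dotCLM c - μ • dotCLM v) Q (x 0)) :
    ∃ i ≤ k, IsMaxOn (dotCLM c) Q (x i) := by
  have key : ∀ i ≤ k, (∃ j < i, IsMaxOn (dotCLM c) Q (x j)) ∨
      ∃ μ : ℝ, 0 ≤ μ ∧ IsMaxOn (dotCLM c - μ • dotCLM v) Q (x i) := by
    intro i
    induction i with
    | zero => exact fun _ => Or.inr ⟨μ, hμ, h₀⟩
    | succ i ih =>
      intro hi
      rcases ih (by omega) with ⟨j, hj, hmax⟩ | ⟨μ, hμ, hmax⟩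
      · exact Or.inl ⟨j, by omega, hmax⟩
      · exact (hpath.isMaxOn_or_isMaxOn_succ hQ hi hμ hmax).imp (fun h => ⟨i, by omega, h⟩) id
  rcases key k le_rfl with ⟨j, hj, hmax⟩ | ⟨μ, hμ, hmax⟩
  · exact ⟨j, hj.le, hmax⟩
  · refine ⟨k, le_rfl, ?_⟩
    simpa using hQ.isMaxOn_sub_smul_of_forall_impNbr (μ₂ := 0) (hpath.1 k le_rfl) hμ hmax
      fun u hu => (hpath.2.2 u hu).elim

end ShadowPath

theorem shadow_path_length_bound_general {n : ℕ} (Q : Set (Fin n → ℝ)) (hQ : IsPolytope Q)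
    (c v : Fin n → ℝ) (k : ℕ) (x : ℕ → Fin n → ℝ)
    (hpath : ShadowPath Q c v k x)
    (hmin : ∀ z ∈ Q, dotR v (x 0) ≤ dotR v z)
    (hmaxF : ∀ y ∈ Q, (∀ z ∈ Q, dotR v y ≤ dotR v z) → dotR c y ≤ dotR c (x 0)) :
    k + 1 ≤ ((fun u => dotR v u) '' (Q.extremePoints ℝ)).ncard ∧
      ∃ i ≤ k, ∀ y ∈ Q, dotR c y ≤ dotR c (x i) := by
  refine ⟨hpath.succ_le_ncard hQ, ?_⟩
  obtain ⟨V, -, rfl⟩ := id hQ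
  obtain ⟨μ, hμ, h₀⟩ := exists_nonneg_isMaxOn_sub_smul (c := dotCLM c) (v := dotCLM v)
    (isMinOn_iff.2 hmin) fun z hz hvz => hmaxF z hz fun z' hz' => hvz.le.trans (hmin z' hz')
  obtain ⟨i, hi, hmax⟩ := hpath.exists_isMaxOn hQ hμ h₀
  exact ⟨i, hi, isMaxOn_iff.1 hmax⟩

/-- Corollary 3.3: the length of a Shadow-rule path starting at a `c`-maximum of the
`v`-minimal face is at most `|{⟨v,u⟩ : u vertex of Q}| − 1`, and the path contains a
`c`-maximum of `Q`. -/
theorem shadow_path_length_bound {n : ℕ} (Q : Set (Fin n → ℝ)) (hQ : IsPolytope Q)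
    (c v : Fin n → ℝ) (hv : v ≠ 0) (k : ℕ) (x : ℕ → Fin n → ℝ)
    (hpath : ShadowPath Q c v k x)
    (hmin : ∀ z ∈ Q, dotR v (x 0) ≤ dotR v z)
    (hmaxF : ∀ y ∈ Q, (∀ z ∈ Q, dotR v y ≤ dotR v z) → dotR c y ≤ dotR c (x 0)) :
    k + 1 ≤ ((fun u => dotR v u) '' (Q.extremePoints ℝ)).ncard ∧
      ∃ i ≤ k, ∀ y ∈ Q, dotR c y ≤ dotR c (x i) :=
  shadow_path_length_bound_general Q hQ c v k x hpath hmin hmaxF
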